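/- Classical propositional logic has the uniform Lyndon interpolation property: for every propositional formula φ and all finite sets P⁺, P⁻ of propositional variables, there exists a formula θ such that (1) φ→θ is a tautology, (2) v⁺(θ)⊆v⁺(φ)∖P⁺ and v⁻(θ)⊆v⁻(φ)∖P⁻, and (3) for every formula ψ such that φ→ψ is a tautology, v⁺(ψ)∩P⁺=∅ and v⁻(ψ)∩P⁻=∅, the formula θ→ψ is a tautology. -/

import Mathlib

/-- Propositional formulas over countably many variables. -/
inductive PropForm : Type where
  | var : ℕ → PropForm
  | bot : PropForm
  | and : PropForm → PropForm → PropForm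
  | or : PropForm → PropForm → PropForm
  | not : PropForm → PropForm
  | imp : PropForm → PropForm → PropForm

namespace PropForm

mutual
  /-- positively occurring variables -/
  def vpos : PropForm → Finset ℕ
    | var p => {p}
    | bot => ∅
    | and φ ψ => vpos φ ∪ vpos ψ
    | or φ ψ => vpos φ ∪ vpos ψ
    | not φ => vneg φ
    | imp φ ψ => vneg φ ∪ vpos ψ
  /-- negatively occurring variables -/
  def vneg : PropForm → Finset ℕ
    | var _ => ∅
    | bot => ∅
    | and φ ψ => vneg φ ∪ vneg ψ
    | or φ ψ => vneg φ ∪ vneg ψ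
    | not φ => vpos φ
    | imp φ ψ => vpos φ ∪ vneg ψ
end

/-- Classical evaluation of a formula under a truth assignment. -/
def eval (V : ℕ → Bool) : PropForm → Bool
  | var p => V p
  | bot => false
  | and φ ψ => eval V φ && eval V ψ
  | or φ ψ => eval V φ || eval V ψ
  | not φ => !(eval V φ)
  | imp φ ψ => !(eval V φ) || eval V ψ

end PropForm

/-- `V0 →₀^{(P⁺,P⁻)} V1`: every `(P⁺,P⁻)`-formula true under `V0` is true under `V1`. -/
def PropArrow (Pp Pm : Finset ℕ) (V0 V1 : ℕ → Bool) : Prop :=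
  ∀ φ : PropForm, φ.vpos ⊆ Pp → φ.vneg ⊆ Pm → φ.eval V0 = true → φ.eval V1 = true

/-- A tautology of classical propositional logic. -/
def Tautology (φ : PropForm) : Prop := ∀ V : ℕ → Bool, φ.eval V = true


/-! The uniform interpolant of φ is the disjunction, over the assignments `V` of the variables of
φ that satisfy φ, of the cube asserting `p` for the `V`-true variables of `vpos φ \ P⁺` and `¬p`
for the `V`-false variables of `vneg φ \ P⁻`. Truth of a formula is monotone in each variable
according to its polarity. So if `W` satisfies the cube of `V` and `φ → ψ` is a tautology with
ψ avoiding `P⁺` positively and `P⁻` negatively, one can move `V` towards `W` while keeping φ true,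
and from there reach `W` while keeping ψ true. -/

namespace PropForm

theorem eval_le_eval (χ : PropForm) {V V' : ℕ → Bool}
    (hpos : ∀ p ∈ χ.vpos, V p ≤ V' p) (hneg : ∀ p ∈ χ.vneg, V' p ≤ V p) :
    χ.eval V ≤ χ.eval V' := by
  induction χ generalizing V V' with
  | var p => exact hpos p (Finset.mem_singleton_self p)
  | bot => exact le_rfl
  | and φ ψ ihφ ihψ =>
    simp only [vpos, vneg, Finset.mem_union] at hpos hneg
    exact inf_le_inf (ihφ (fun p hp => hpos p (.inl hp)) fun p hp => hneg p (.inl hp))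
      (ihψ (fun p hp => hpos p (.inr hp)) fun p hp => hneg p (.inr hp))
  | or φ ψ ihφ ihψ =>
    simp only [vpos, vneg, Finset.mem_union] at hpos hneg
    exact sup_le_sup (ihφ (fun p hp => hpos p (.inl hp)) fun p hp => hneg p (.inl hp))
      (ihψ (fun p hp => hpos p (.inr hp)) fun p hp => hneg p (.inr hp))
  | not φ ih => exact compl_le_compl (ih hneg hpos)
  | imp φ ψ ihφ ihψ =>
    simp only [vpos, vneg, Finset.mem_union] at hpos hneg
    exact sup_le_sup
      (compl_le_compl (ihφ (fun p hp => hneg p (.inl hp)) fun p hp => hpos p (.inl hp)))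
      (ihψ (fun p hp => hpos p (.inr hp)) fun p hp => hneg p (.inr hp))

theorem eval_congr (χ : PropForm) {V V' : ℕ → Bool}
    (h : ∀ p ∈ χ.vpos ∪ χ.vneg, V p = V' p) : χ.eval V = χ.eval V' :=
  le_antisymm
    (χ.eval_le_eval (fun p hp => (h p (Finset.mem_union_left _ hp)).le)
      fun p hp => (h p (Finset.mem_union_right _ hp)).ge)
    (χ.eval_le_eval (fun p hp => (h p (Finset.mem_union_left _ hp)).ge)
      fun p hp => (h p (Finset.mem_union_right _ hp)).le)

def conj : List PropForm → PropForm
  | [] => not bot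
  | χ :: l => and χ (conj l)

def disj : List PropForm → PropForm
  | [] => bot
  | χ :: l => or χ (disj l)

theorem eval_conj (V : ℕ → Bool) (l : List PropForm) :
    (conj l).eval V = true ↔ ∀ χ ∈ l, χ.eval V = true := by
  induction l with
  | nil => simp [conj, eval]
  | cons χ l ih => simp [conj, eval, ih]

theorem eval_disj (V : ℕ → Bool) (l : List PropForm) :
    (disj l).eval V = true ↔ ∃ χ ∈ l, χ.eval V = true := by
  induction l with
  | nil => simp [disj, eval]
  | cons χ l ih => simp [disj, eval, ih]

theorem conj_vars_subset {X Y : Finset ℕ} {l : List PropForm}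
    (h : ∀ χ ∈ l, χ.vpos ⊆ X ∧ χ.vneg ⊆ Y) : (conj l).vpos ⊆ X ∧ (conj l).vneg ⊆ Y := by
  induction l with
  | nil => simp [conj, vpos, vneg]
  | cons χ l ih =>
    simp only [List.forall_mem_cons] at h
    simp only [conj, vpos, vneg, Finset.union_subset_iff]
    exact ⟨⟨h.1.1, (ih h.2).1⟩, h.1.2, (ih h.2).2⟩

theorem disj_vars_subset {X Y : Finset ℕ} {l : List PropForm}
    (h : ∀ χ ∈ l, χ.vpos ⊆ X ∧ χ.vneg ⊆ Y) : (disj l).vpos ⊆ X ∧ (disj l).vneg ⊆ Y := by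
  induction l with
  | nil => simp [disj, vpos, vneg]
  | cons χ l ih =>
    simp only [List.forall_mem_cons] at h
    simp only [disj, vpos, vneg, Finset.union_subset_iff]
    exact ⟨⟨h.1.1, (ih h.2).1⟩, h.1.2, (ih h.2).2⟩

end PropForm

open PropForm

theorem tautology_imp_iff {φ ψ : PropForm} :
    Tautology (φ.imp ψ) ↔ ∀ V, φ.eval V = true → ψ.eval V = true := by
  simp [Tautology, eval, or_iff_not_imp_left]

theorem eval_of_tautology_imp {φ ψ : PropForm} {Pp Pm : Finset ℕ} {V W : ℕ → Bool}
    (hφψ : Tautology (φ.imp ψ)) (hψp : Disjoint ψ.vpos Pp) (hψm : Disjoint ψ.vneg Pm)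
    (hV : φ.eval V = true) (hpos : ∀ p ∈ φ.vpos \ Pp, V p ≤ W p)
    (hneg : ∀ p ∈ φ.vneg \ Pm, W p ≤ V p) : ψ.eval W = true := by
  -- U moves V to W wherever the polarities of φ allow it, so φ stays true at U; at the other
  -- variables the bounds `hpos`, `hneg` are exactly what carries ψ from U to W.
  let U : ℕ → Bool := fun p =>
    if (V p ≤ W p ∧ p ∉ φ.vneg) ∨ (W p ≤ V p ∧ p ∉ φ.vpos) then W p else V p
  have hVU : φ.eval V ≤ φ.eval U := by
    refine φ.eval_le_eval (fun p hp => ?_) fun p hp => ?_ <;> dsimp only [U] <;> split_ifs with h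
    all_goals first | exact le_rfl | grind
  have hUW : ψ.eval U ≤ ψ.eval W := by
    refine ψ.eval_le_eval (fun p hp => ?_) fun p hp => ?_ <;> dsimp only [U] <;> split_ifs with h
    · exact le_rfl
    · have := hpos p
      have := Finset.disjoint_left.1 hψp hp
      grind
    · exact le_rfl
    · have := hneg p
      have := Finset.disjoint_left.1 hψm hp
      grind
  exact Bool.le_iff_imp.1 hUW (tautology_imp_iff.1 hφψ U (Bool.le_iff_imp.1 hVU hV))

noncomputable section

def cube (Qp Qm : Finset ℕ) (V : ℕ → Bool) : PropForm :=
  conj ((Qp.filter (V · = true)).toList.map var ++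
    (Qm.filter (V · = false)).toList.map fun p => not (var p))

theorem eval_cube {Qp Qm : Finset ℕ} {V W : ℕ → Bool} :
    (cube Qp Qm V).eval W = true ↔ (∀ p ∈ Qp, V p ≤ W p) ∧ ∀ p ∈ Qm, W p ≤ V p := by
  simp only [cube, eval_conj, List.mem_append, List.mem_map, Finset.mem_toList,
    Finset.mem_filter]
  constructor
  · intro h
    refine ⟨fun p hp => ?_, fun p hp => ?_⟩ <;> cases hV : V p
    · exact Bool.false_le _
    · simpa [eval, Bool.le_iff_imp] using h (var p) (.inl ⟨p, ⟨hp, hV⟩, rfl⟩)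
    · simpa [eval, Bool.le_iff_imp] using h _ (.inr ⟨p, ⟨hp, hV⟩, rfl⟩)
    · exact Bool.le_true _
  · rintro ⟨hpos, hneg⟩ χ (⟨p, ⟨hp, hV⟩, rfl⟩ | ⟨p, ⟨hp, hV⟩, rfl⟩)
    · simpa [eval, hV, Bool.le_iff_imp] using hpos p hp
    · simpa [eval, hV, Bool.le_iff_imp] using hneg p hp

theorem cube_vars_subset (Qp Qm : Finset ℕ) (V : ℕ → Bool) :
    (cube Qp Qm V).vpos ⊆ Qp ∧ (cube Qp Qm V).vneg ⊆ Qm := by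
  refine conj_vars_subset ?_
  simp only [List.mem_append, List.mem_map, Finset.mem_toList, Finset.mem_filter]
  rintro χ (⟨p, ⟨hp, -⟩, rfl⟩ | ⟨p, ⟨hp, -⟩, rfl⟩) <;> simp [vpos, vneg, hp]

def uniformInterpolant (φ : PropForm) (Pp Pm : Finset ℕ) : PropForm :=
  disj (((φ.vpos ∪ φ.vneg).powerset.filter fun T => φ.eval (· ∈ T)).toList.map
    fun T => cube (φ.vpos \ Pp) (φ.vneg \ Pm) (· ∈ T))

end

theorem tautology_imp_uniformInterpolant (φ : PropForm) (Pp Pm : Finset ℕ) :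
    Tautology (φ.imp (uniformInterpolant φ Pp Pm)) := by
  refine tautology_imp_iff.2 fun V hV => ?_
  set T := (φ.vpos ∪ φ.vneg).filter (V · = true)
  have hVT : ∀ p ∈ φ.vpos ∪ φ.vneg, V p = decide (p ∈ T) := by
    intro p hp
    cases hVp : V p <;> simp [T, hp, hVp]
  refine (eval_disj V _).2 ⟨cube (φ.vpos \ Pp) (φ.vneg \ Pm) (· ∈ T), List.mem_map_of_mem ?_,
    eval_cube.2 ⟨fun p hp => ?_, fun p hp => ?_⟩⟩
  · rw [Finset.mem_toList, Finset.mem_filter, Finset.mem_powerset]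
    exact ⟨Finset.filter_subset _ _, (φ.eval_congr hVT).symm.trans hV⟩
  · exact (hVT p (Finset.mem_union_left _ (Finset.mem_sdiff.1 hp).1)).ge
  · exact (hVT p (Finset.mem_union_right _ (Finset.mem_sdiff.1 hp).1)).le

theorem uniformInterpolant_vars_subset (φ : PropForm) (Pp Pm : Finset ℕ) :
    (uniformInterpolant φ Pp Pm).vpos ⊆ φ.vpos \ Pp ∧
      (uniformInterpolant φ Pp Pm).vneg ⊆ φ.vneg \ Pm := by
  refine disj_vars_subset ?_
  simp only [List.mem_map]
  rintro _ ⟨T, -, rfl⟩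
  exact cube_vars_subset _ _ _

theorem tautology_uniformInterpolant_imp {φ ψ : PropForm} {Pp Pm : Finset ℕ}
    (hφψ : Tautology (φ.imp ψ)) (hψp : Disjoint ψ.vpos Pp) (hψm : Disjoint ψ.vneg Pm) :
    Tautology ((uniformInterpolant φ Pp Pm).imp ψ) := by
  refine tautology_imp_iff.2 fun W hW => ?_
  obtain ⟨χ, hχ, hWχ⟩ := (eval_disj W _).1 hW
  obtain ⟨T, hT, rfl⟩ := List.mem_map.1 hχ
  obtain ⟨hpos, hneg⟩ := eval_cube.1 hWχ
  exact eval_of_tautology_imp hφψ hψp hψm (Finset.mem_filter.1 (Finset.mem_toList.1 hT)).2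
    hpos hneg

theorem stmt1 (φ : PropForm) (Pp Pm : Finset ℕ) :
    ∃ θ : PropForm,
      Tautology (φ.imp θ) ∧
      θ.vpos ⊆ φ.vpos \ Pp ∧ θ.vneg ⊆ φ.vneg \ Pm ∧
      ∀ ψ : PropForm, Tautology (φ.imp ψ) →
        Disjoint ψ.vpos Pp → Disjoint ψ.vneg Pm →
        Tautology (θ.imp ψ) :=
  ⟨uniformInterpolant φ Pp Pm, tautology_imp_uniformInterpolant φ Pp Pm,
    (uniformInterpolant_vars_subset φ Pp Pm).1, (uniformInterpolant_vars_subset φ Pp Pm).2,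
    fun _ => tautology_uniformInterpolant_imp⟩
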